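/- arXiv:2412.19599 — 5 statements merged into one kernel-verified Lean document; each statement's English description precedes it below -/
import Mathlib

section
/- Let H be a Hermitian matrix on a finite-dimensional complex Hilbert space with spectral decomposition H = Σ_j E_j Π_j (distinct real eigenvalues E_j, orthogonal spectral projections Π_j), let σ > 0, and let g_σ(t) = (2πσ²)^{−1/2} e^{−t²/(2σ²)} be the centered Gaussian density. Then for every complex matrix ρ, the Gaussian stabilization channel satisfies ∫_ℝ g_σ(t) e^{−iHt} ρ e^{iHt} dt = Σ_{i,j} e^{−σ²(E_i−E_j)²/2} Π_i ρ Π_j; in particular 𝒢_σ suppresses the off-diagonal blocks of ρ in the eigenbasis of H by the factor e^{−σ²(E_i−E_j)²/2}. -/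
open MeasureTheory Matrix
open scoped ComplexOrder

noncomputable section

attribute [local instance] Matrix.frobeniusNormedAddCommGroup Matrix.frobeniusNormedSpace
attribute [local instance] Matrix.frobeniusNormedRing Matrix.frobeniusNormedAlgebra

/-! The spectral projections of `H` form a complete family of orthogonal idempotents, so
`a ↦ ∑ⱼ aⱼ • Πⱼ` is a continuous ring homomorphism out of `ℂᵐ`. It therefore commutes with the
exponential, which gives `e^{-iHt} ρ e^{iHt} = ∑ᵢⱼ e^{i(Eⱼ - Eᵢ)t} Πᵢ ρ Πⱼ`. Averaging against the
Gaussian density replaces each phase by the characteristic function of `𝒩(0, σ²)` at `Eⱼ - Eᵢ`,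
namely `e^{-σ²(Eᵢ - Eⱼ)²/2}`. -/

open Complex NormedSpace ProbabilityTheory

section SpectralCalculus

variable {ι R 𝔹 : Type*} [Fintype ι] {P : ι → 𝔹}

@[simps]
def CompleteOrthogonalIdempotents.linearCombinationRingHom [CommSemiring R] [Semiring 𝔹]
    [Algebra R 𝔹] [DecidableEq ι] (hP : CompleteOrthogonalIdempotents P) : (ι → R) →+* 𝔹 where
  toFun a := ∑ i, a i • P i
  map_one' := by simp [hP.complete]
  map_mul' a b := by
    simp only [Pi.mul_apply, Finset.sum_mul_sum, smul_mul_smul_comm, hP.mul_eq, smul_ite,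
      smul_zero, Finset.sum_ite_eq, Finset.mem_univ, if_true]
  map_zero' := by simp
  map_add' a b := by simp [add_smul, Finset.sum_add_distrib]

theorem sum_smul_mul_mul_sum_smul [CommSemiring R] [Semiring 𝔹] [Algebra R 𝔹]
    (a b : ι → R) (x : 𝔹) :
    (∑ i, a i • P i) * x * ∑ j, b j • P j = ∑ i, ∑ j, (a i * b j) • (P i * x * P j) := by
  simp only [Finset.sum_mul, Finset.mul_sum, smul_mul_assoc, mul_smul_comm, Finset.smul_sum,
    smul_smul]
  rw [Finset.sum_comm]
  exact Finset.sum_congr rfl fun i _ => Finset.sum_congr rfl fun j _ => by rw [mul_comm]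

variable [NormedRing 𝔹] [NormedAlgebra ℂ 𝔹] [Algebra ℚ 𝔹]

theorem CompleteOrthogonalIdempotents.exp_sum_smul (hP : CompleteOrthogonalIdempotents P)
    (a : ι → ℂ) : exp (∑ i, a i • P i) = ∑ i, cexp (a i) • P i := by
  classical
  have hcont : Continuous (hP.linearCombinationRingHom (R := ℂ)) :=
    continuous_finsetSum _ fun i _ => (continuous_apply i).smul continuous_const
  simpa [Pi.exp_def, ← Complex.exp_eq_exp_ℂ] using (map_exp _ hcont a).symm

theorem CompleteOrthogonalIdempotents.exp_conj (hP : CompleteOrthogonalIdempotents P)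
    (E : ι → ℝ) (t : ℝ) (x : 𝔹) :
    exp ((-(I * t)) • ∑ i, (E i : ℂ) • P i) * x * exp ((I * t) • ∑ i, (E i : ℂ) • P i) =
      ∑ i, ∑ j, cexp (↑(E j - E i) * t * I) • (P i * x * P j) := by
  simp only [Finset.smul_sum, smul_smul, hP.exp_sum_smul, sum_smul_mul_mul_sum_smul,
    ← Complex.exp_add]
  congr! 4
  push_cast
  ring

end SpectralCalculus

theorem integral_gaussianDensity_smul {F : Type*} [NormedAddCommGroup F] [NormedSpace ℝ F]
    (σ : ℝ) (hσ : σ ≠ 0) (f : ℝ → F) :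
    ∫ t, ((√(2 * Real.pi * σ ^ 2))⁻¹ * Real.exp (-t ^ 2 / (2 * σ ^ 2))) • f t =
      ∫ t, f t ∂gaussianReal 0 (σ ^ 2).toNNReal := by
  rw [integral_gaussianReal_eq_integral_smul (by simpa using hσ)]
  simp only [gaussianPDFReal, Real.coe_toNNReal _ (sq_nonneg σ), sub_zero]

theorem integral_sum_cexp_mul_I_smul {κ F : Type*} [Fintype κ] [NormedAddCommGroup F]
    [NormedSpace ℂ F] [CompleteSpace F] (μ : Measure ℝ) [IsFiniteMeasure μ] (c : κ → ℝ)
    (Q : κ → F) :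
    ∫ t, ∑ k, cexp (c k * t * I) • Q k ∂μ = ∑ k, charFun μ (c k) • Q k := by
  have hint (k : κ) : Integrable (fun t : ℝ => cexp (c k * t * I)) μ :=
    Integrable.of_bound (by fun_prop) 1 (ae_of_all _ fun t => by
      rw [← ofReal_mul, norm_exp_ofReal_mul_I])
  rw [integral_finsetSum _ fun k _ => (hint k).smul_const (Q k)]
  simp only [integral_smul_const, charFun_apply_real]

theorem gaussian_stabilization_eq_dephased_sum_general
    {n m : ℕ} (H : Matrix (Fin n) (Fin n) ℂ)
    (E : Fin m → ℝ) (P : Fin m → Matrix (Fin n) (Fin n) ℂ)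
    (hOrth : ∀ j k, P j * P k = if j = k then P j else 0)
    (hSum : ∑ j, P j = 1)
    (hH : H = ∑ j, (E j : ℂ) • P j)
    (σ : ℝ) (hσ : 0 < σ) (ρ : Matrix (Fin n) (Fin n) ℂ) :
    (∫ t : ℝ, ((Real.sqrt (2 * Real.pi * σ ^ 2))⁻¹ * Real.exp (-t ^ 2 / (2 * σ ^ 2))) •
        (NormedSpace.exp ((-(Complex.I * (t : ℂ))) • H) * ρ *
          NormedSpace.exp ((Complex.I * (t : ℂ)) • H))) =
      ∑ i, ∑ j, Real.exp (-σ ^ 2 * (E i - E j) ^ 2 / 2) • (P i * ρ * P j) := by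
  have hP : CompleteOrthogonalIdempotents P :=
    { idem := fun j => show P j * P j = P j by simpa using hOrth j j
      ortho := fun j k hjk => by simpa [hjk] using hOrth j k
      complete := hSum }
  have hconj (t : ℝ) : exp ((-(I * t)) • H) * ρ * exp ((I * t) • H) =
      ∑ i, ∑ j, cexp (↑(E j - E i) * t * I) • (P i * ρ * P j) := by
    rw [hH]
    -- only defeq: `exp` here uses the product topology on matrices, `exp_conj` the Frobenius one
    exact hP.exp_conj E t ρ
  simp only [hconj, integral_gaussianDensity_smul σ hσ.ne', ← Fintype.sum_prod_type',
    integral_sum_cexp_mul_I_smul, charFun_gaussianReal]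
  refine Fintype.sum_congr _ _ fun ij => ?_
  rw [← Complex.coe_smul, Real.coe_toNNReal _ (sq_nonneg σ)]
  congr 1
  push_cast
  ring_nf

/-- Gaussian stabilization suppresses off-diagonal blocks:
`∫ g_σ(t) e^{−iHt} ρ e^{iHt} dt = Σ_{i,j} e^{−σ²(E_i−E_j)²/2} Π_i ρ Π_j`. -/
theorem gaussian_stabilization_eq_dephased_sum
    {n m : ℕ} (H : Matrix (Fin n) (Fin n) ℂ)
    (E : Fin m → ℝ) (P : Fin m → Matrix (Fin n) (Fin n) ℂ)
    (hE : Function.Injective E)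
    (hHerm : ∀ j, (P j)ᴴ = P j)
    (hOrth : ∀ j k, P j * P k = if j = k then P j else 0)
    (hSum : ∑ j, P j = 1)
    (hH : H = ∑ j, (E j : ℂ) • P j)
    (σ : ℝ) (hσ : 0 < σ) (ρ : Matrix (Fin n) (Fin n) ℂ) :
    (∫ t : ℝ, ((Real.sqrt (2 * Real.pi * σ ^ 2))⁻¹ * Real.exp (-t ^ 2 / (2 * σ ^ 2))) •
        (NormedSpace.exp ((-(Complex.I * (t : ℂ))) • H) * ρ *
          NormedSpace.exp ((Complex.I * (t : ℂ)) • H))) =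
      ∑ i, ∑ j, Real.exp (-σ ^ 2 * (E i - E j) ^ 2 / 2) • (P i * ρ * P j) :=
  gaussian_stabilization_eq_dephased_sum_general H E P hOrth hSum hH σ hσ ρ
end
end

section
/- Let H be a Hermitian matrix with spectral decomposition H = Σ_j E_j Π_j, let σ, δ > 0, and let ρ be a density matrix. Then the tail of the filter representation of the Gaussian stabilization is exponentially small: ‖∫_{ℝ ∖ [−‖H‖_∞−δ, ‖H‖_∞+δ]} G_σ(x) ρ G_σ(x) dx‖₁ ≤ erfc(√2 σ δ) ≤ e^{−2σ²δ²}, where erfc(z) = (2/√π)∫_z^∞ e^{−u²} du is the complementary error function. -/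
/-!
Write `G_σ(x) = Σ_j w_j(x) Π_j` with scalar Gaussian weights `w_j`. The integrand
`G_σ(x) ρ G_σ(x)` is positive semidefinite, so the integral is too and its trace norm is its trace.
By orthogonality of the projections, `Tr (G_σ(x) ρ G_σ(x)) = Σ_j w_j(x)² Tr (Π_j ρ)`, where the
weights `Tr (Π_j ρ)` form a probability vector, and `w_j²` is the normalized Gaussian density of
mean `E_j` and scale `1 / (√2 σ)`. Every `E_j` with `Π_j ≠ 0` is an eigenvalue, so `|E_j| ≤ ‖H‖_∞`:
the region of integration then misses `[E_j - δ, E_j + δ]`, where the Gaussian tail outside that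
window is exactly `erfc(√2 σ δ)`. The bound `erfc z ≤ e^{-z²}` for `z ≥ 0` follows from
`u² ≥ z² + (u - z)²` on `u ≥ z`.
-/

open MeasureTheory Matrix
open scoped ComplexOrder

noncomputable section

attribute [local instance] Matrix.frobeniusNormedAddCommGroup Matrix.frobeniusNormedSpace

/-- The trace norm `‖A‖₁ = Tr √(A†A)` of a complex matrix. -/
def traceNorm {n : ℕ} (A : Matrix (Fin n) (Fin n) ℂ) : ℝ :=
  ((Matrix.posSemidef_conjTranspose_mul_self A).1.eigenvectorUnitary.1 *
      Matrix.diagonal (((↑) : ℝ → ℂ) ∘ Real.sqrt ∘ (Matrix.posSemidef_conjTranspose_mul_self A).1.eigenvalues) *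
      (star (Matrix.posSemidef_conjTranspose_mul_self A).1.eigenvectorUnitary :
        Matrix (Fin n) (Fin n) ℂ)).trace.re

/-- The operator norm `‖A‖_∞` (largest singular value) of a complex matrix. -/
def opNorm {n : ℕ} (A : Matrix (Fin n) (Fin n) ℂ) : ℝ :=
  ‖Matrix.toEuclideanCLM (𝕜 := ℂ) A‖

/-- The Gaussian energy filter `G_σ(x) = Σ_j (√2 σ/√π)^{1/2} e^{−σ²(E_j−x)²} Π_j`. -/
def gaussianFilter {n m : ℕ} (E : Fin m → ℝ) (P : Fin m → Matrix (Fin n) (Fin n) ℂ)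
    (σ x : ℝ) : Matrix (Fin n) (Fin n) ℂ :=
  ∑ j, (Real.sqrt (Real.sqrt 2 * σ / Real.sqrt Real.pi) *
      Real.exp (-σ ^ 2 * (E j - x) ^ 2)) • P j

/-- The complementary error function `erfc(z) = (2/√π) ∫_z^∞ e^{−u²} du`. -/
def erfc (z : ℝ) : ℝ :=
  2 / Real.sqrt Real.pi * ∫ u in Set.Ioi z, Real.exp (-u ^ 2)

open Real Set

theorem setIntegral_comp_sub_right {E : Type*} [NormedAddCommGroup E] [NormedSpace ℝ E]
    (f : ℝ → E) (s : Set ℝ) (c : ℝ) :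
    ∫ x in (· - c) ⁻¹' s, f (x - c) = ∫ x in s, f x :=
  (measurePreserving_sub_right volume c).setIntegral_preimage_emb
    (measurableEmbedding_subRight c) f s

theorem integrable_exp_neg_mul_sub_sq {s : ℝ} (hs : s ≠ 0) (c : ℝ) :
    Integrable fun x : ℝ => exp (-(s * (x - c)) ^ 2) := by
  have h := (integrable_exp_neg_mul_sq (pow_pos (abs_pos.2 hs) 2)).comp_sub_right c
  simpa only [sq_abs, ← mul_pow, neg_mul] using h

theorem erfc_le_exp_neg_sq {z : ℝ} (hz : 0 ≤ z) : erfc z ≤ exp (-z ^ 2) := by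
  have hshift : ∫ u in Ioi z, exp (-(u - z) ^ 2) = √π / 2 := by
    have hpre : (· - z) ⁻¹' Ioi 0 = Ioi z := by ext; simp
    rw [← hpre, setIntegral_comp_sub_right (fun u => exp (-u ^ 2))]
    simpa using integral_gaussian_Ioi 1
  have hmono : ∫ u in Ioi z, exp (-u ^ 2) ≤ ∫ u in Ioi z, exp (-z ^ 2) * exp (-(u - z) ^ 2) := by
    refine setIntegral_mono_on ?_ ?_ measurableSet_Ioi fun u hu => ?_
    · simpa using (integrable_exp_neg_mul_sub_sq one_ne_zero 0).integrableOn
    · simpa using ((integrable_exp_neg_mul_sub_sq one_ne_zero z).const_mul _).integrableOn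
    · rw [← exp_add]
      exact exp_le_exp.2 (by nlinarith [mem_Ioi.1 hu])
  rw [integral_const_mul, hshift] at hmono
  calc erfc z ≤ 2 / √π * (exp (-z ^ 2) * (√π / 2)) := by
        unfold erfc; gcongr
    _ = exp (-z ^ 2) := by field_simp

theorem integral_compl_Icc_gaussian {s δ : ℝ} (hs : 0 < s) (hδ : 0 ≤ δ) :
    ∫ x in (Icc (-δ) δ)ᶜ, s / √π * exp (-(s * x) ^ 2) = erfc (s * δ) := by
  set g : ℝ → ℝ := fun x => s / √π * exp (-(s * x) ^ 2)
  have heven : (Icc (-δ) δ)ᶜ.indicator g = fun x => (Ioi δ).indicator g |x| := by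
    ext x
    simp [indicator, g, mul_pow, ← abs_le]
  rw [← integral_indicator measurableSet_Icc.compl, heven, integral_comp_abs,
    setIntegral_indicator measurableSet_Ioi, Ioi_inter_Ioi, max_eq_right hδ, integral_const_mul,
    integral_comp_mul_left_Ioi (fun y => exp (-y ^ 2)) δ hs, smul_eq_mul, erfc]
  field_simp

theorem setIntegral_compl_Icc_gaussian_le_erfc {s δ M c : ℝ} (hs : 0 < s) (hδ : 0 ≤ δ)
    (hc : |c| ≤ M) :
    ∫ x in (Icc (-(M + δ)) (M + δ))ᶜ, s / √π * exp (-(s * (x - c)) ^ 2) ≤ erfc (s * δ) := by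
  have hsub : (Icc (-(M + δ)) (M + δ))ᶜ ⊆ (· - c) ⁻¹' (Icc (-δ) δ)ᶜ := by
    intro x hx hxc
    obtain ⟨h₁, h₂⟩ := abs_le.1 hc
    exact hx ⟨by linarith [hxc.1], by linarith [hxc.2]⟩
  calc _ ≤ ∫ x in (· - c) ⁻¹' (Icc (-δ) δ)ᶜ, s / √π * exp (-(s * (x - c)) ^ 2) :=
        setIntegral_mono_set ((integrable_exp_neg_mul_sub_sq hs.ne' c).const_mul _).integrableOn
          (ae_of_all _ fun x => by positivity) (ae_of_all _ hsub)
    _ = erfc (s * δ) := by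
      rw [setIntegral_comp_sub_right (fun y => s / √π * exp (-(s * y) ^ 2)),
        integral_compl_Icc_gaussian hs hδ]

section OrthogonalIdempotents

variable {R A I : Type*} [CommSemiring R] [Semiring A] [Algebra R A] [Fintype I] {e : I → A}

theorem OrthogonalIdempotents.sum_smul_mul (he : OrthogonalIdempotents e) (a : I → R) (j : I) :
    (∑ i, a i • e i) * e j = a j • e j := by
  classical
  simp [Finset.sum_mul, he.mul_eq]

theorem OrthogonalIdempotents.sum_smul_mul_sum_smul (he : OrthogonalIdempotents e) (a b : I → R) :
    (∑ i, a i • e i) * ∑ i, b i • e i = ∑ i, (a i * b i) • e i := by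
  simp [Finset.mul_sum, he.sum_smul_mul, smul_smul, mul_comm]

end OrthogonalIdempotents

namespace Matrix

variable {m : Type*} [Fintype m]

theorem PosSemidef.re_trace_mul_nonneg {P ρ : Matrix m m ℂ} (hρ : ρ.PosSemidef)
    (hP : P.IsHermitian) (hPP : IsIdempotentElem P) : 0 ≤ (P * ρ).trace.re := by
  have h : (P * ρ).trace = (Pᴴ * ρ * P).trace := by
    rw [hP.eq, trace_mul_cycle, hPP.eq]
  rw [h]
  exact (Complex.nonneg_iff.1 (hρ.conjTranspose_mul_mul_same P).trace_nonneg).1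

theorem re_trace_sum_smul_mul_mul_sum_smul [DecidableEq m] {I : Type*} [Fintype I]
    {P : I → Matrix m m ℂ} (hP : OrthogonalIdempotents P) (c : I → ℝ) (ρ : Matrix m m ℂ) :
    ((∑ i, c i • P i) * ρ * ∑ i, c i • P i).trace.re = ∑ i, c i ^ 2 * (P i * ρ).trace.re := by
  rw [trace_mul_cycle, hP.sum_smul_mul_sum_smul, Finset.sum_mul, trace_sum, Complex.re_sum]
  simp [sq]

end Matrix

open scoped MatrixOrder in
/-- `traceNorm A` is the eigendecomposition form of `cfc sqrt (Aᴴ * A)`, and `√(A * A) = A` for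
`A ≥ 0`. -/
theorem Matrix.PosSemidef.traceNorm_eq_re_trace {n : ℕ} {A : Matrix (Fin n) (Fin n) ℂ}
    (hA : A.PosSemidef) : traceNorm A = A.trace.re := by
  have hAA : 0 ≤ Aᴴ * A := (posSemidef_conjTranspose_mul_self A).nonneg
  have h := (posSemidef_conjTranspose_mul_self A).1.cfc_eq sqrt
  rw [IsHermitian.cfc, Unitary.conjStarAlgAut_apply] at h
  rw [traceNorm]
  congr 2
  refine h.symm.trans ?_
  rw [← cfcₙ_eq_cfc (hf0 := sqrt_zero), ← CFC.sqrt_eq_real_sqrt _ hAA, hA.1.eq,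
    CFC.sqrt_mul_self A hA.nonneg]

theorem abs_le_opNorm_of_mul_eq_smul {n : ℕ} {H Q : Matrix (Fin n) (Fin n) ℂ} {e : ℝ} (hQ : Q ≠ 0)
    (h : H * Q = (e : ℂ) • Q) : |e| ≤ opNorm H := by
  set T := Matrix.toEuclideanCLM (n := Fin n) (𝕜 := ℂ)
  have hTQ : 0 < ‖T Q‖ := norm_pos_iff.2 ((map_ne_zero_iff _ T.injective).2 hQ)
  refine le_of_mul_le_mul_right ?_ hTQ
  calc |e| * ‖T Q‖ = ‖T (H * Q)‖ := by rw [h, map_smul, norm_smul, Complex.norm_real, norm_eq_abs]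
    _ ≤ opNorm H * ‖T Q‖ := by rw [map_mul]; exact norm_mul_le _ _

def gaussianWeight (σ e x : ℝ) : ℝ :=
  √(√2 * σ / √π) * exp (-σ ^ 2 * (e - x) ^ 2)

theorem gaussianFilter_eq_sum {n m : ℕ} (E : Fin m → ℝ) (P : Fin m → Matrix (Fin n) (Fin n) ℂ)
    (σ x : ℝ) : gaussianFilter E P σ x = ∑ j, gaussianWeight σ (E j) x • P j :=
  rfl

theorem gaussianWeight_sq {σ : ℝ} (hσ : 0 ≤ σ) (e x : ℝ) :
    gaussianWeight σ e x ^ 2 = √2 * σ / √π * exp (-(√2 * σ * (x - e)) ^ 2) := by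
  rw [gaussianWeight, mul_pow, sq_sqrt (by positivity), ← exp_nat_mul]
  congr 2
  rw [mul_pow, mul_pow, sq_sqrt zero_le_two]
  ring

theorem continuous_gaussianWeight (σ e : ℝ) : Continuous (gaussianWeight σ e) := by
  unfold gaussianWeight
  fun_prop

theorem norm_gaussianWeight_le (σ e x : ℝ) : ‖gaussianWeight σ e x‖ ≤ √(√2 * σ / √π) := by
  have hexp : exp (-σ ^ 2 * (e - x) ^ 2) ≤ 1 :=
    exp_le_one_iff.2 (mul_nonpos_of_nonpos_of_nonneg (neg_nonpos.2 (sq_nonneg σ)) (sq_nonneg _))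
  rw [norm_eq_abs, gaussianWeight, abs_of_nonneg (by positivity)]
  exact mul_le_of_le_one_right (sqrt_nonneg _) hexp

theorem integrable_gaussianWeight_mul {σ : ℝ} (hσ : 0 < σ) (a b : ℝ) :
    Integrable fun x => gaussianWeight σ a x * gaussianWeight σ b x := by
  have hb : Integrable (gaussianWeight σ b) := by
    have h := (integrable_exp_neg_mul_sub_sq hσ.ne' b).const_mul (√(√2 * σ / √π))
    refine h.congr (ae_of_all _ fun x => ?_)
    simp only [gaussianWeight]
    ring_nf
  exact hb.bdd_mul (continuous_gaussianWeight σ a).aestronglyMeasurable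
    (ae_of_all _ (norm_gaussianWeight_le σ a))

theorem setIntegral_gaussianWeight_sq_le_erfc {σ δ M e : ℝ} (hσ : 0 < σ) (hδ : 0 ≤ δ)
    (he : |e| ≤ M) :
    ∫ x in (Icc (-(M + δ)) (M + δ))ᶜ, gaussianWeight σ e x ^ 2 ≤ erfc (√2 * σ * δ) := by
  simp only [gaussianWeight_sq hσ.le]
  exact setIntegral_compl_Icc_gaussian_le_erfc (by positivity) hδ he

/-- The topology of the Frobenius norm. It is the product topology of matrices only up to an
unfolding that instance search does not perform; without it `Integrable` is not available for
matrix-valued maps. -/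
abbrev Matrix.frobeniusTopology {m : Type*} [Fintype m] : TopologicalSpace (Matrix m m ℂ) :=
  (frobeniusNormedAddCommGroup : NormedAddCommGroup (Matrix m m ℂ)).toUniformSpace.toTopologicalSpace

attribute [local instance] Matrix.frobeniusTopology

namespace Matrix

variable {m : Type*} [Fintype m]

theorem isClosed_setOf_posSemidef : IsClosed {A : Matrix m m ℂ | A.PosSemidef} := by
  simp only [posSemidef_iff_dotProduct_mulVec, ofPred_and, ofPred_forall]
  exact (isClosed_eq (by fun_prop) continuous_id).inter
    (isClosed_iInter fun x => isClosed_le continuous_const (by fun_prop))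

open scoped MatrixOrder in
instance : ClosedIciTopology (Matrix m m ℂ) where
  isClosed_Ici A := by
    simp only [Ici, le_iff]
    exact isClosed_setOf_posSemidef.preimage (continuous_sub_right A)

open scoped MatrixOrder in
theorem posSemidef_integral {α : Type*} [MeasurableSpace α] {μ : Measure α}
    {f : α → Matrix m m ℂ} (hf : ∀ x, (f x).PosSemidef) : (∫ x, f x ∂μ).PosSemidef :=
  nonneg_iff_posSemidef.1 (integral_nonneg fun x => (hf x).nonneg)

theorem re_trace_integral {α : Type*} [MeasurableSpace α] {μ : Measure α}
    {f : α → Matrix m m ℂ} (hf : Integrable f μ) :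
    (∫ x, f x ∂μ).trace.re = ∫ x, (f x).trace.re ∂μ :=
  let L : Matrix m m ℂ →L[ℝ] ℝ := Complex.reCLM.comp
    ((traceLinearMap m ℂ ℂ).restrictScalars ℝ).toContinuousLinearMap
  (L.integral_comp_comm hf).symm

end Matrix

theorem integrable_gaussianFilter_mul_mul {n m : ℕ} (E : Fin m → ℝ)
    (P : Fin m → Matrix (Fin n) (Fin n) ℂ) {σ : ℝ} (hσ : 0 < σ) (ρ : Matrix (Fin n) (Fin n) ℂ) :
    Integrable fun x => gaussianFilter E P σ x * ρ * gaussianFilter E P σ x := by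
  have hexpand : ∀ x, gaussianFilter E P σ x * ρ * gaussianFilter E P σ x =
      ∑ k, ∑ j, (gaussianWeight σ (E k) x * gaussianWeight σ (E j) x) • (P j * ρ * P k) := by
    intro x
    simp only [gaussianFilter_eq_sum, Finset.sum_mul, Finset.mul_sum, smul_mul_assoc,
      mul_smul_comm, Finset.smul_sum, smul_smul]
  simp only [hexpand]
  exact integrable_finsetSum _ fun j _ => integrable_finsetSum _ fun k _ =>
    (integrable_gaussianWeight_mul hσ (E j) (E k)).smul_const _

theorem Matrix.PosSemidef.gaussianFilter_mul_mul {n m : ℕ} {ρ : Matrix (Fin n) (Fin n) ℂ}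
    (hρ : ρ.PosSemidef) (E : Fin m → ℝ) {P : Fin m → Matrix (Fin n) (Fin n) ℂ}
    (hP : ∀ j, (P j).IsHermitian) (σ x : ℝ) :
    (gaussianFilter E P σ x * ρ * gaussianFilter E P σ x).PosSemidef := by
  have hG : (gaussianFilter E P σ x)ᴴ = gaussianFilter E P σ x := by
    simp [gaussianFilter_eq_sum, conjTranspose_sum, (hP _).eq]
  simpa only [hG] using hρ.conjTranspose_mul_mul_same (gaussianFilter E P σ x)

theorem gaussian_filter_tail_bound_general
    {n m : ℕ} (H : Matrix (Fin n) (Fin n) ℂ)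
    (E : Fin m → ℝ) (P : Fin m → Matrix (Fin n) (Fin n) ℂ)
    (hHerm : ∀ j, (P j)ᴴ = P j)
    (hOrth : ∀ j k, P j * P k = if j = k then P j else 0)
    (hSum : ∑ j, P j = 1)
    (hH : H = ∑ j, (E j : ℂ) • P j)
    (σ δ : ℝ) (hσ : 0 < σ) (hδ : 0 < δ)
    (ρ : Matrix (Fin n) (Fin n) ℂ) (hρ : ρ.PosSemidef) (hρ1 : ρ.trace = 1) :
    traceNorm (∫ x in (Set.Icc (-(opNorm H + δ)) (opNorm H + δ))ᶜ,
        gaussianFilter E P σ x * ρ * gaussianFilter E P σ x) ≤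
      erfc (Real.sqrt 2 * σ * δ) ∧
    erfc (Real.sqrt 2 * σ * δ) ≤ Real.exp (-2 * σ ^ 2 * δ ^ 2) := by
  have hP : OrthogonalIdempotents P := OrthogonalIdempotents.iff_mul_eq.2 hOrth
  set S := (Icc (-(opNorm H + δ)) (opNorm H + δ))ᶜ
  set t : Fin m → ℝ := fun j => (P j * ρ).trace.re
  have ht_nonneg j : 0 ≤ t j := hρ.re_trace_mul_nonneg (hHerm j) (hP.idem j)
  have ht_sum : ∑ j, t j = 1 := by
    rw [← Complex.re_sum, ← trace_sum, ← Finset.sum_mul, hSum, one_mul, hρ1, Complex.one_re]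
  have htail j : ∫ x in S, gaussianWeight σ (E j) x ^ 2 * t j ≤ erfc (√2 * σ * δ) * t j := by
    rw [integral_mul_const]
    rcases (ht_nonneg j).eq_or_lt with ht | ht
    · simp [← ht]
    have hPj : P j ≠ 0 := by rintro h0; simp [t, h0] at ht
    refine mul_le_mul_of_nonneg_right (setIntegral_gaussianWeight_sq_le_erfc hσ hδ.le ?_) ht.le
    exact abs_le_opNorm_of_mul_eq_smul hPj (hH ▸ hP.sum_smul_mul _ j)
  refine ⟨?_, (erfc_le_exp_neg_sq (by positivity)).trans_eq ?_⟩
  · calc traceNorm (∫ x in S, gaussianFilter E P σ x * ρ * gaussianFilter E P σ x)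
          = ∫ x in S, (gaussianFilter E P σ x * ρ * gaussianFilter E P σ x).trace.re := by
            rw [(posSemidef_integral (hρ.gaussianFilter_mul_mul E hHerm σ)).traceNorm_eq_re_trace,
              re_trace_integral (integrable_gaussianFilter_mul_mul E P hσ ρ).integrableOn]
        _ = ∑ j, ∫ x in S, gaussianWeight σ (E j) x ^ 2 * t j := by
            simp only [gaussianFilter_eq_sum, re_trace_sum_smul_mul_mul_sum_smul hP]
            refine integral_finsetSum _ fun j _ => ?_
            simpa only [sq] using
              (integrable_gaussianWeight_mul hσ (E j) (E j)).integrableOn.mul_const (t j)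
        _ ≤ ∑ j, erfc (√2 * σ * δ) * t j := Finset.sum_le_sum fun j _ => htail j
        _ = erfc (√2 * σ * δ) := by rw [← Finset.mul_sum, ht_sum, mul_one]
  · rw [mul_pow, mul_pow, sq_sqrt zero_le_two]
    ring_nf

/-- The tail of the filter representation of Gaussian stabilization is
exponentially small:
`‖∫_{ℝ∖[−‖H‖_∞−δ,‖H‖_∞+δ]} G_σ(x) ρ G_σ(x) dx‖₁ ≤ erfc(√2 σδ) ≤ e^{−2σ²δ²}`. -/
theorem gaussian_filter_tail_bound
    {n m : ℕ} (H : Matrix (Fin n) (Fin n) ℂ)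
    (E : Fin m → ℝ) (P : Fin m → Matrix (Fin n) (Fin n) ℂ)
    (hE : Function.Injective E)
    (hHerm : ∀ j, (P j)ᴴ = P j)
    (hOrth : ∀ j k, P j * P k = if j = k then P j else 0)
    (hSum : ∑ j, P j = 1)
    (hH : H = ∑ j, (E j : ℂ) • P j)
    (σ δ : ℝ) (hσ : 0 < σ) (hδ : 0 < δ)
    (ρ : Matrix (Fin n) (Fin n) ℂ) (hρ : ρ.PosSemidef) (hρ1 : ρ.trace = 1) :
    traceNorm (∫ x in (Set.Icc (-(opNorm H + δ)) (opNorm H + δ))ᶜ,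
        gaussianFilter E P σ x * ρ * gaussianFilter E P σ x) ≤
      erfc (Real.sqrt 2 * σ * δ) ∧
    erfc (Real.sqrt 2 * σ * δ) ≤ Real.exp (-2 * σ ^ 2 * δ ^ 2) :=
  gaussian_filter_tail_bound_general H E P hHerm hOrth hSum hH σ δ hσ hδ ρ hρ hρ1
end
end

section
/- Let H = Σ_m E_m Π_m be a Hermitian matrix with distinct eigenvalues E_m and spectral projections Π_m, let Ω = {E_i − E_j} be the set of its Bohr frequencies, let A_1, …, A_N be matrices, and for ω ∈ Ω set A_α(ω) = Σ_{m,n : E_n − E_m = ω} Π_m A_α Π_n. Let Γ_{αβ}(ω) ∈ ℂ be arbitrary coefficients, and define 𝒦ρ = Σ_{ω,ω'∈Ω} Σ_{α,β} Γ_{αβ}(ω) (A_β(ω) ρ A_α(ω')† − A_α(ω')† A_β(ω) ρ) + h.c. (the Redfield dissipator) and ℒρ = Σ_{ω∈Ω} Σ_{α,β} Γ_{αβ}(ω) (A_β(ω) ρ A_α(ω)† − A_α(ω)† A_β(ω) ρ) + h.c. (its rotating-wave / Lindblad part, keeping only ω' = ω). Then for every matrix ρ_s commuting with H, Tr(H 𝒦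 ρ_s) = Tr(H ℒ ρ_s); i.e., for stationary states the Redfield and Lindblad equations predict the same energy dissipation power regardless of the rotating-wave approximation. -/
open Matrix

noncomputable section

/-- The jump operator `A(ω) = Σ_{m,n : E_n − E_m = ω} Π_m A Π_n`. -/
def jumpOp {n m : ℕ} (E : Fin m → ℝ) (P : Fin m → Matrix (Fin n) (Fin n) ℂ)
    (A : Matrix (Fin n) (Fin n) ℂ) (ω : ℝ) : Matrix (Fin n) (Fin n) ℂ :=
  ∑ i, ∑ j, if E j - E i = ω then P i * A * P j else 0

/-- The finite set of Bohr frequencies `Ω = {E_i − E_j}`. -/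
def bohrSet {m : ℕ} (E : Fin m → ℝ) : Finset ℝ :=
  Finset.image (fun p : Fin m × Fin m => E p.1 - E p.2) Finset.univ


section AuxLemmas

variable {n m : ℕ} {H : Matrix (Fin n) (Fin n) ℂ}
  {E : Fin m → ℝ} {P : Fin m → Matrix (Fin n) (Fin n) ℂ}

lemma PH_eq (hOrth : ∀ j k, P j * P k = if j = k then P j else 0)
    (hH : H = ∑ j, (E j : ℂ) • P j) (a : Fin m) :
    P a * H = (E a : ℂ) • P a := by
  rw [hH, Finset.mul_sum, Finset.sum_eq_single a]
  · rw [mul_smul_comm, hOrth, if_pos rfl]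
  · intro b _ hb
    rw [mul_smul_comm, hOrth, if_neg (Ne.symm hb), smul_zero]
  · simp

lemma HP_eq (hOrth : ∀ j k, P j * P k = if j = k then P j else 0)
    (hH : H = ∑ j, (E j : ℂ) • P j) (a : Fin m) :
    H * P a = (E a : ℂ) • P a := by
  rw [hH, Finset.sum_mul, Finset.sum_eq_single a]
  · rw [smul_mul_assoc, hOrth, if_pos rfl]
  · intro b _ hb
    rw [smul_mul_assoc, hOrth, if_neg hb, smul_zero]
  · simp

lemma rho_block (hE : Function.Injective E)
    (hOrth : ∀ j k, P j * P k = if j = k then P j else 0)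
    (hH : H = ∑ j, (E j : ℂ) • P j)
    {ρs : Matrix (Fin n) (Fin n) ℂ} (hρs : H * ρs = ρs * H)
    {a b : Fin m} (hab : a ≠ b) : P a * ρs * P b = 0 := by
  have h1 : P a * (H * ρs) * P b = (E a : ℂ) • (P a * ρs * P b) := by
    rw [← mul_assoc, PH_eq hOrth hH, smul_mul_assoc, smul_mul_assoc]
  have h2 : P a * (ρs * H) * P b = (E b : ℂ) • (P a * ρs * P b) := by
    rw [mul_assoc (P a) (ρs * H) (P b), mul_assoc ρs H (P b), HP_eq hOrth hH,
      mul_smul_comm, mul_smul_comm, ← mul_assoc]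
  have h3 : ((E a : ℂ) - (E b : ℂ)) • (P a * ρs * P b) = 0 := by
    rw [sub_smul, ← h1, ← h2, hρs, sub_self]
  have hne : ((E a : ℂ) - (E b : ℂ)) ≠ 0 := by
    rw [sub_ne_zero]
    exact fun h => hab (hE (by exact_mod_cast h))
  rcases smul_eq_zero.mp h3 with h | h
  · exact absurd h hne
  · exact h

lemma trace_edge {W : Matrix (Fin n) (Fin n) ℂ} {x y : ℂ}
    (h1 : H * W = x • W) (h2 : W * H = y • W) (hxy : x ≠ y) :
    (H * W).trace = 0 := by
  have hT : x * W.trace = y * W.trace := by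
    have := Matrix.trace_mul_comm H W
    rw [h1, h2, trace_smul, trace_smul] at this
    simpa using this
  have hW : W.trace = 0 := by
    rcases mul_eq_zero.mp (sub_eq_zero.mpr hT ▸ (by ring : (x - y) * W.trace = x * W.trace - y * W.trace)) with h | h
    · exact absurd (sub_eq_zero.mp h) hxy
    · exact h
  rw [h1, trace_smul, hW, smul_zero]

lemma trace_edge1 (hE : Function.Injective E)
    (hOrth : ∀ j k, P j * P k = if j = k then P j else 0)
    (hH : H = ∑ j, (E j : ℂ) • P j)
    (i a : Fin m) (Z : Matrix (Fin n) (Fin n) ℂ) (hia : i ≠ a) :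
    (H * (P i * Z * P a)).trace = 0 := by
  apply trace_edge (x := (E i : ℂ)) (y := (E a : ℂ))
  · rw [← mul_assoc, ← mul_assoc, HP_eq hOrth hH, smul_mul_assoc, smul_mul_assoc]
  · rw [mul_assoc, PH_eq hOrth hH, mul_smul_comm]
  · exact fun h => hia (hE (by exact_mod_cast h))

lemma trace_edge2 (hE : Function.Injective E)
    (hOrth : ∀ j k, P j * P k = if j = k then P j else 0)
    (hH : H = ∑ j, (E j : ℂ) • P j)
    {ρs : Matrix (Fin n) (Fin n) ℂ} (hρs : H * ρs = ρs * H)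
    (i j : Fin m) (Z : Matrix (Fin n) (Fin n) ℂ) (hij : i ≠ j) :
    (H * (P i * Z * (P j * ρs))).trace = 0 := by
  apply trace_edge (x := (E i : ℂ)) (y := (E j : ℂ))
  · rw [← mul_assoc H (P i * Z) (P j * ρs), ← mul_assoc H (P i) Z, HP_eq hOrth hH,
      smul_mul_assoc, smul_mul_assoc]
  · rw [mul_assoc (P i * Z) (P j * ρs) H, mul_assoc (P j) ρs H, ← hρs,
      ← mul_assoc (P j) H ρs, PH_eq hOrth hH, smul_mul_assoc, mul_smul_comm]
  · exact fun h => hij (hE (by exact_mod_cast h))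

lemma jumpOp_conjTranspose (hHerm : ∀ j, (P j)ᴴ = P j)
    (A : Matrix (Fin n) (Fin n) ℂ) (ω : ℝ) :
    (jumpOp E P A ω)ᴴ = ∑ a, ∑ b, if E b - E a = ω then P b * Aᴴ * P a else 0 := by
  unfold jumpOp
  rw [conjTranspose_sum]
  refine Finset.sum_congr rfl fun a _ => ?_
  rw [conjTranspose_sum]
  refine Finset.sum_congr rfl fun b _ => ?_
  split_ifs with h
  · rw [conjTranspose_mul, conjTranspose_mul, hHerm, hHerm, mul_assoc]
  · exact conjTranspose_zero

end AuxLemmas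

section Core

variable {n m : ℕ} {H : Matrix (Fin n) (Fin n) ℂ}
  {E : Fin m → ℝ} {P : Fin m → Matrix (Fin n) (Fin n) ℂ}

lemma cross_zero1 (hE : Function.Injective E)
    (hHerm : ∀ j, (P j)ᴴ = P j)
    (hOrth : ∀ j k, P j * P k = if j = k then P j else 0)
    (hH : H = ∑ j, (E j : ℂ) • P j)
    {ρs : Matrix (Fin n) (Fin n) ℂ} (hρs : H * ρs = ρs * H)
    (B A : Matrix (Fin n) (Fin n) ℂ) {ω ω' : ℝ} (hne : ω ≠ ω') :
    (H * (jumpOp E P B ω * ρs * (jumpOp E P A ω')ᴴ)).trace = 0 := by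
  rw [jumpOp_conjTranspose hHerm]
  unfold jumpOp
  simp only [Finset.sum_mul, Finset.mul_sum, Matrix.mul_sum, trace_sum]
  refine Finset.sum_eq_zero fun i _ => Finset.sum_eq_zero fun j _ =>
    Finset.sum_eq_zero fun a _ => Finset.sum_eq_zero fun b _ => ?_
  split_ifs with hc1 hc2
  · by_cases hbj : b = j
    · by_cases hai : a = i
      · exact absurd (by rw [← hc1, ← hc2, hbj, hai]) hne
      · rw [show P a * B * P b * ρs * (P j * Aᴴ * P i)
            = P a * (B * (P b * (ρs * (P j * Aᴴ)))) * P i from by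
              simp only [mul_assoc]]
        exact trace_edge1 hE hOrth hH a i _ hai
    · rw [show P a * B * P b * ρs * (P j * Aᴴ * P i)
          = P a * (B * ((P b * ρs * P j) * (Aᴴ * P i))) from by
            simp only [mul_assoc],
        rho_block hE hOrth hH hρs hbj, zero_mul, mul_zero, mul_zero, mul_zero,
        trace_zero]
  · simp
  · simp
  · simp

lemma cross_zero2 (hE : Function.Injective E)
    (hHerm : ∀ j, (P j)ᴴ = P j)
    (hOrth : ∀ j k, P j * P k = if j = k then P j else 0)
    (hH : H = ∑ j, (E j : ℂ) • P j)
    {ρs : Matrix (Fin n) (Fin n) ℂ} (hρs : H * ρs = ρs * H)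
    (B A : Matrix (Fin n) (Fin n) ℂ) {ω ω' : ℝ} (hne : ω ≠ ω') :
    (H * ((jumpOp E P A ω')ᴴ * jumpOp E P B ω * ρs)).trace = 0 := by
  rw [jumpOp_conjTranspose hHerm]
  unfold jumpOp
  simp only [Finset.sum_mul, Finset.mul_sum, Matrix.mul_sum, trace_sum]
  refine Finset.sum_eq_zero fun a _ => Finset.sum_eq_zero fun b _ =>
    Finset.sum_eq_zero fun i _ => Finset.sum_eq_zero fun j _ => ?_
  split_ifs with hc2 hc1
  · by_cases hia : i = a
    · by_cases hjb : j = b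
      · exact absurd (by rw [← hc1, ← hc2, hjb, hia]) hne
      · rw [show P j * Aᴴ * P i * (P a * B * P b) * ρs
            = P j * (Aᴴ * ((P i * P a) * B)) * (P b * ρs) from by
              simp only [mul_assoc],
          hOrth, if_pos hia]
        exact trace_edge2 hE hOrth hH hρs j b _ hjb
    · rw [show P j * Aᴴ * P i * (P a * B * P b) * ρs
          = P j * (Aᴴ * ((P i * P a) * (B * (P b * ρs)))) from by
            simp only [mul_assoc],
        hOrth, if_neg hia, zero_mul, mul_zero, mul_zero, mul_zero, trace_zero]
  · simp
  · simp
  · simp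

lemma cross_zero (hE : Function.Injective E)
    (hHerm : ∀ j, (P j)ᴴ = P j)
    (hOrth : ∀ j k, P j * P k = if j = k then P j else 0)
    (hH : H = ∑ j, (E j : ℂ) • P j)
    {ρs : Matrix (Fin n) (Fin n) ℂ} (hρs : H * ρs = ρs * H)
    (B A : Matrix (Fin n) (Fin n) ℂ) {ω ω' : ℝ} (hne : ω ≠ ω') :
    (H * (jumpOp E P B ω * ρs * (jumpOp E P A ω')ᴴ -
      (jumpOp E P A ω')ᴴ * jumpOp E P B ω * ρs)).trace = 0 := by
  rw [Matrix.mul_sub, trace_sub, cross_zero1 hE hHerm hOrth hH hρs B A hne,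
    cross_zero2 hE hHerm hOrth hH hρs B A hne, sub_zero]

end Core

/-- The Redfield dissipator
`𝒦ρ = Σ_{ω,ω'∈Ω} Σ_{α,β} Γ_{αβ}(ω)(A_β(ω) ρ A_α(ω')† − A_α(ω')† A_β(ω) ρ) + h.c.`. -/
def redfieldDissipator {n m N : ℕ} (E : Fin m → ℝ)
    (P : Fin m → Matrix (Fin n) (Fin n) ℂ)
    (A : Fin N → Matrix (Fin n) (Fin n) ℂ) (Γ : Fin N → Fin N → ℝ → ℂ)
    (ρ : Matrix (Fin n) (Fin n) ℂ) : Matrix (Fin n) (Fin n) ℂ :=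
  (∑ ω ∈ bohrSet E, ∑ ω' ∈ bohrSet E, ∑ α, ∑ β, Γ α β ω •
      (jumpOp E P (A β) ω * ρ * (jumpOp E P (A α) ω')ᴴ -
        (jumpOp E P (A α) ω')ᴴ * jumpOp E P (A β) ω * ρ)) +
    (∑ ω ∈ bohrSet E, ∑ ω' ∈ bohrSet E, ∑ α, ∑ β, Γ α β ω •
      (jumpOp E P (A β) ω * ρ * (jumpOp E P (A α) ω')ᴴ -
        (jumpOp E P (A α) ω')ᴴ * jumpOp E P (A β) ω * ρ))ᴴ

/-- The rotating-wave (Lindblad) part of the dissipator, keeping only `ω' = ω`. -/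
def lindbladDissipator {n m N : ℕ} (E : Fin m → ℝ)
    (P : Fin m → Matrix (Fin n) (Fin n) ℂ)
    (A : Fin N → Matrix (Fin n) (Fin n) ℂ) (Γ : Fin N → Fin N → ℝ → ℂ)
    (ρ : Matrix (Fin n) (Fin n) ℂ) : Matrix (Fin n) (Fin n) ℂ :=
  (∑ ω ∈ bohrSet E, ∑ α, ∑ β, Γ α β ω •
      (jumpOp E P (A β) ω * ρ * (jumpOp E P (A α) ω)ᴴ -
        (jumpOp E P (A α) ω)ᴴ * jumpOp E P (A β) ω * ρ)) +
    (∑ ω ∈ bohrSet E, ∑ α, ∑ β, Γ α β ω •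
      (jumpOp E P (A β) ω * ρ * (jumpOp E P (A α) ω)ᴴ -
        (jumpOp E P (A α) ω)ᴴ * jumpOp E P (A β) ω * ρ))ᴴ

/-- On stationary states (states commuting with `H`), the Redfield and
Lindblad dissipators predict the same energy dissipation power:
`Tr(H 𝒦 ρ_s) = Tr(H ℒ ρ_s)`, regardless of the rotating-wave approximation. -/
theorem redfield_lindblad_power_agree_on_stationary_states
    {n m N : ℕ} (H : Matrix (Fin n) (Fin n) ℂ)
    (E : Fin m → ℝ) (P : Fin m → Matrix (Fin n) (Fin n) ℂ)
    (hE : Function.Injective E)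
    (hHerm : ∀ j, (P j)ᴴ = P j)
    (hOrth : ∀ j k, P j * P k = if j = k then P j else 0)
    (hSum : ∑ j, P j = 1)
    (hH : H = ∑ j, (E j : ℂ) • P j)
    (A : Fin N → Matrix (Fin n) (Fin n) ℂ) (Γ : Fin N → Fin N → ℝ → ℂ)
    (ρs : Matrix (Fin n) (Fin n) ℂ) (hρs : H * ρs = ρs * H) :
    (H * redfieldDissipator E P A Γ ρs).trace =
      (H * lindbladDissipator E P A Γ ρs).trace := by
  have hHH : Hᴴ = H := by
    rw [hH]
    simp [Matrix.conjTranspose_sum, Matrix.conjTranspose_smul, hHerm,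
      Complex.star_def, Complex.conj_ofReal]
  have hstar : ∀ X : Matrix (Fin n) (Fin n) ℂ,
      (H * Xᴴ).trace = star (H * X).trace := by
    intro X
    rw [← Matrix.trace_conjTranspose, Matrix.conjTranspose_mul, hHH,
      Matrix.trace_mul_comm]
  have main : (H * (∑ ω ∈ bohrSet E, ∑ ω' ∈ bohrSet E, ∑ α, ∑ β, Γ α β ω •
      (jumpOp E P (A β) ω * ρs * (jumpOp E P (A α) ω')ᴴ -
        (jumpOp E P (A α) ω')ᴴ * jumpOp E P (A β) ω * ρs))).trace =
      (H * (∑ ω ∈ bohrSet E, ∑ α, ∑ β, Γ α β ω •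
      (jumpOp E P (A β) ω * ρs * (jumpOp E P (A α) ω)ᴴ -
        (jumpOp E P (A α) ω)ᴴ * jumpOp E P (A β) ω * ρs))).trace := by
    simp only [Matrix.mul_sum, trace_sum]
    refine Finset.sum_congr rfl fun ω hω => ?_
    refine Finset.sum_eq_single_of_mem ω hω fun ω' _ hω' => ?_
    refine Finset.sum_eq_zero fun α _ => Finset.sum_eq_zero fun β _ => ?_
    rw [Matrix.mul_smul, trace_smul,
      cross_zero hE hHerm hOrth hH hρs (A β) (A α) (Ne.symm hω'), smul_zero]
  unfold redfieldDissipator lindbladDissipator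
  rw [Matrix.mul_add, Matrix.mul_add, trace_add, trace_add, hstar, hstar, main]
end
end

section
/- Let T, Ω > 0, let 𝔍(ω) = (ω³/Ω²) e^{−ω/Ω} be the super-Ohmic spectral density with exponential cutoff (s = 3), and define the bath correlation function C(T, 𝔍; t) = ∫_0^∞ 𝔍(ω) [ e^{iωt}/(e^{ω/T} − 1) + e^{−iωt} (1/(e^{ω/T} − 1) + 1) ] dω for t ∈ ℝ. Then C(T, 𝔍; t) = (6 T⁴/Ω²) [ b(4, 1 + T/Ω − iTt) + b(4, T/Ω + iTt) ], where b(z, u) = Σ_{n=0}^∞ (n + u)^{−z} is the generalized (Hurwitz) zeta function; these arguments equal (1 + Ω/T − iΩt)/(Ω/T) and (1 + iΩt)/(Ω/T), respectively, and Γ(4) = 6. -/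
open MeasureTheory

noncomputable section

/-- The super-Ohmic (`s = 3`) spectral density with exponential cutoff,
`𝔍(ω) = ω³/Ω² · e^{−ω/Ω}`. -/
def Jspec (Ω ω : ℝ) : ℝ := ω ^ 3 / Ω ^ 2 * Real.exp (-ω / Ω)

/-- The bath correlation function
`C(T,𝔍;t) = ∫_0^∞ 𝔍(ω)[e^{iωt}/(e^{ω/T}−1) + e^{−iωt}(1/(e^{ω/T}−1)+1)] dω`. -/
def bathCorr (T Ω t : ℝ) : ℂ :=
  ∫ ω in Set.Ioi (0 : ℝ), (Jspec Ω ω : ℂ) *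
    (Complex.exp (Complex.I * (ω : ℂ) * (t : ℂ)) / (Complex.exp ((ω : ℂ) / (T : ℂ)) - 1) +
      Complex.exp (-(Complex.I * (ω : ℂ) * (t : ℂ))) *
        (1 / (Complex.exp ((ω : ℂ) / (T : ℂ)) - 1) + 1))

/-- The generalized (Hurwitz) zeta function `b(z,u) = Σ_{n=0}^∞ (n+u)^{−z}`. -/
def genZeta (z u : ℂ) : ℂ := ∑' k : ℕ, ((k : ℂ) + u) ^ (-z)

/-!
Expanding the Bose factor, `1/(e^{ω/T} - 1) = ∑_{k ≥ 1} e^{-kω/T}` and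
`1/(e^{ω/T} - 1) + 1 = ∑_{k ≥ 0} e^{-kω/T}`, turns the integrand into `Ω⁻²` times two series
of terms `ω³ e^{-aω}` with `a = (k + u)/T`, `u` being one of the two Hurwitz parameters.
Each term integrates to `3!/a⁴ = 6 T⁴ (k + u)⁻⁴`, and the series may be integrated termwise
because `∫ |ω³ e^{-aω}| = 3!/(Re a)⁴` is summable in `k`.
-/

open Set Filter Topology
open scoped Nat

namespace Complex

lemma norm_ofReal_pow_mul_exp_neg_mul {x : ℝ} (hx : 0 ≤ x) (n : ℕ) (a : ℂ) :
    ‖(x : ℂ) ^ n * exp (-(a * x))‖ = x ^ n * Real.exp (-(a.re * x)) := by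
  rw [norm_mul, norm_pow, norm_real, Real.norm_of_nonneg hx, norm_exp]
  simp

lemma integrableOn_pow_mul_exp_neg_mul {a : ℂ} (ha : 0 < a.re) (n : ℕ) :
    IntegrableOn (fun x : ℝ => (x : ℂ) ^ n * exp (-(a * x))) (Ioi 0) := by
  have hreal := integrableOn_rpow_mul_exp_neg_mul_rpow (p := 1) (s := n)
    (by linarith [n.cast_nonneg (α := ℝ)]) one_pos ha
  refine hreal.mono' (by fun_prop) ?_
  filter_upwards [ae_restrict_mem measurableSet_Ioi] with x (hx : 0 < x)
  rw [norm_ofReal_pow_mul_exp_neg_mul hx.le, Real.rpow_natCast, Real.rpow_one, neg_mul]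

lemma tendsto_pow_mul_exp_neg_mul_atTop {a : ℂ} (ha : 0 < a.re) (n : ℕ) :
    Tendsto (fun x : ℝ => (x : ℂ) ^ n * exp (-(a * x))) atTop (𝓝 0) := by
  rw [tendsto_zero_iff_norm_tendsto_zero]
  have hreal : Tendsto (fun x : ℝ => x ^ (n : ℝ) * Real.exp (-a.re * x)) atTop (𝓝 0) :=
    tendsto_rpow_mul_exp_neg_mul_atTop_nhds_zero n a.re ha
  refine hreal.congr' ?_
  filter_upwards [eventually_ge_atTop 0] with x hx
  rw [norm_ofReal_pow_mul_exp_neg_mul hx, Real.rpow_natCast, neg_mul]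

lemma integral_pow_succ_mul_exp_neg_mul {a : ℂ} (ha : 0 < a.re) (n : ℕ) :
    ∫ x in Ioi (0 : ℝ), (x : ℂ) ^ (n + 1) * exp (-(a * x)) =
      (n + 1) / a * ∫ x in Ioi (0 : ℝ), (x : ℂ) ^ n * exp (-(a * x)) := by
  have ha0 : a ≠ 0 := fun h => by simp [h] at ha
  have hu (x : ℝ) (_ : x ∈ Ioi 0) :
      HasDerivAt (fun x : ℝ => (x : ℂ) ^ (n + 1)) ((n + 1) * (x : ℂ) ^ n) x := by
    simpa using (hasDerivAt_pow (n + 1) (x : ℂ)).comp_ofReal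
  have hv (x : ℝ) (_ : x ∈ Ioi 0) :
      HasDerivAt (fun x : ℝ => exp (-(a * x)) / -a) (exp (-(a * x))) x := by
    have := ((((hasDerivAt_id (x : ℂ)).const_mul a).neg.cexp).div_const (-a)).comp_ofReal
    simpa [ha0] using this
  have hu'v : IntegrableOn (fun x : ℝ => ((n + 1) * (x : ℂ) ^ n) * (exp (-(a * x)) / -a))
      (Ioi 0) :=
    ((integrableOn_pow_mul_exp_neg_mul ha n).const_mul (-(n + 1) / a)).congr
      (.of_forall fun x => by ring)
  have hcont : Continuous fun x : ℝ => (x : ℂ) ^ (n + 1) * (exp (-(a * x)) / -a) := by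
    fun_prop
  have hzero : Tendsto (fun x : ℝ => (x : ℂ) ^ (n + 1) * (exp (-(a * x)) / -a)) (𝓝[>] 0)
      (𝓝 0) := by
    simpa using (hcont.tendsto 0).mono_left nhdsWithin_le_nhds
  have hinfty : Tendsto (fun x : ℝ => (x : ℂ) ^ (n + 1) * (exp (-(a * x)) / -a)) atTop
      (𝓝 0) := by
    simpa using ((tendsto_pow_mul_exp_neg_mul_atTop ha (n + 1)).div_const a).neg.congr
      fun x => by ring
  rw [integral_Ioi_mul_deriv_eq_deriv_mul hu hv (integrableOn_pow_mul_exp_neg_mul ha (n + 1))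
    hu'v hzero hinfty, ← integral_const_mul, sub_self, zero_sub, ← integral_neg]
  congr 1
  funext x
  ring

lemma integral_pow_mul_exp_neg_mul {a : ℂ} (ha : 0 < a.re) (n : ℕ) :
    ∫ x in Ioi (0 : ℝ), (x : ℂ) ^ n * exp (-(a * x)) = n ! / a ^ (n + 1) := by
  have ha0 : a ≠ 0 := fun h => by simp [h] at ha
  induction n with
  | zero =>
    simpa [neg_mul, ← mul_neg, neg_div] using
      integral_exp_mul_complex_Ioi (a := -a) (by simpa using ha) 0
  | succ n ih =>
    rw [integral_pow_succ_mul_exp_neg_mul ha, ih, Nat.factorial_succ]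
    push_cast
    field_simp
    ring

lemma integral_norm_pow_mul_exp_neg_mul {a : ℂ} (ha : 0 < a.re) (n : ℕ) :
    ∫ x in Ioi (0 : ℝ), ‖(x : ℂ) ^ n * exp (-(a * x))‖ = n ! / a.re ^ (n + 1) := by
  have hreal := integral_pow_mul_exp_neg_mul (a := a.re) (by simpa using ha) n
  rw [setIntegral_congr_fun measurableSet_Ioi fun x (hx : 0 < x) =>
    norm_ofReal_pow_mul_exp_neg_mul hx.le n a]
  apply ofReal_injective
  rw [← integral_complex_ofReal]
  push_cast
  exact hreal

lemma hasSum_integral_of_hasSum_pow_mul_exp_neg_mul {ι : Type*} [Countable ι] {a : ι → ℂ}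
    {F : ℝ → ℂ} {n : ℕ} (ha : ∀ i, 0 < (a i).re)
    (hsum : Summable fun i => ((a i).re ^ (n + 1))⁻¹)
    (hF : ∀ x ∈ Ioi (0 : ℝ), HasSum (fun i => (x : ℂ) ^ n * exp (-(a i * x))) (F x)) :
    HasSum (fun i => n ! / a i ^ (n + 1)) (∫ x in Ioi (0 : ℝ), F x) := by
  rw [setIntegral_congr_fun measurableSet_Ioi fun x hx => (hF x hx).tsum_eq.symm]
  simp only [← integral_pow_mul_exp_neg_mul (ha _)]
  refine hasSum_integral_of_summable_integral_norm
    (fun i => integrableOn_pow_mul_exp_neg_mul (ha i) n) ?_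
  simpa only [integral_norm_pow_mul_exp_neg_mul (ha _), div_eq_mul_inv] using
    hsum.mul_left (n ! : ℝ)

lemma hasSum_exp_neg_nat_mul {w : ℂ} (hw : 0 < w.re) :
    HasSum (fun k : ℕ => exp (-(k * w))) (1 / (exp w - 1) + 1) := by
  have hnorm : ‖exp (-w)‖ < 1 := by simpa [norm_exp] using hw
  have hne : exp w - 1 ≠ 0 := by
    rw [sub_ne_zero]
    intro h
    exact hnorm.ne (by simpa [h] using congrArg norm (exp_neg w))
  have hterm : (fun k : ℕ => exp (-(k * w))) = fun k => exp (-w) ^ k :=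
    funext fun k => by rw [← exp_nat_mul, mul_neg]
  have hval : (1 - exp (-w))⁻¹ = 1 / (exp w - 1) + 1 := by
    rw [exp_neg]
    field_simp
    ring
  rw [hterm, ← hval]
  exact hasSum_geometric_of_norm_lt_one hnorm

lemma hasSum_exp_neg_succ_mul {w : ℂ} (hw : 0 < w.re) :
    HasSum (fun k : ℕ => exp (-((k + 1) * w))) (1 / (exp w - 1)) := by
  simpa using (hasSum_nat_add_iff' 1).mpr (hasSum_exp_neg_nat_mul hw)

end Complex

lemma summable_inv_nat_add_pow {c : ℝ} (hc : 0 < c) {p : ℕ} (hp : 1 < p) :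
    Summable fun k : ℕ => (((k : ℝ) + c) ^ p)⁻¹ :=
  ((Real.summable_one_div_nat_add_rpow c p).mpr (by exact_mod_cast hp)).congr fun k => by
    rw [abs_of_pos (by positivity), Real.rpow_natCast, one_div]

lemma hasSum_genZeta {u : ℂ} (hu : 0 < u.re) {p : ℕ} (hp : 1 < p) :
    HasSum (fun k : ℕ => (((k : ℂ) + u) ^ p)⁻¹) (genZeta p u) := by
  have hsum : Summable fun k : ℕ => (((k : ℂ) + u) ^ p)⁻¹ := by
    refine (summable_inv_nat_add_pow hu hp).of_norm_bounded fun k => ?_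
    rw [norm_inv, norm_pow]
    refine inv_anti₀ (by positivity) (pow_le_pow_left₀ (by positivity) ?_ p)
    simpa using Complex.re_le_norm ((k : ℂ) + u)
  simpa [genZeta, Complex.cpow_neg] using hsum.hasSum

open Complex

def bathIntegrand (T Ω t ω : ℝ) : ℂ :=
  Jspec Ω ω *
    (exp (I * ω * t) / (exp (ω / T) - 1) + exp (-(I * ω * t)) * (1 / (exp (ω / T) - 1) + 1))

/-- `ω³ e^{-ω/Ω} e^{±iωt} e^{-kω/T} = ω³ e^{-aω}` with `a = (k + u)/T`: the left summand carries the
thermal factor (`k ≥ 1`, shifted to `k + 1`), the right one the `+ 1` of the emission term. -/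
def bathRate (T Ω t : ℝ) : ℕ ⊕ ℕ → ℂ :=
  Sum.elim (fun k => (k + (1 + (T : ℂ) / Ω - I * T * t)) / T)
    (fun k => (k + ((T : ℂ) / Ω + I * T * t)) / T)

lemma bathRate_inl_re (T Ω t : ℝ) (k : ℕ) :
    (bathRate T Ω t (.inl k)).re = (k + (1 + T / Ω)) / T := by
  simp [bathRate, div_ofReal_re]

lemma bathRate_inr_re (T Ω t : ℝ) (k : ℕ) :
    (bathRate T Ω t (.inr k)).re = (k + T / Ω) / T := by
  simp [bathRate, div_ofReal_re]

lemma bathRate_re_pos {T Ω t : ℝ} (hT : 0 < T) (hΩ : 0 < Ω) (i : ℕ ⊕ ℕ) :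
    0 < (bathRate T Ω t i).re := by
  rcases i with k | k
  · rw [bathRate_inl_re]
    positivity
  · rw [bathRate_inr_re]
    positivity

lemma summable_inv_bathRate_re_pow {T Ω t : ℝ} (hT : 0 < T) (hΩ : 0 < Ω) :
    Summable fun i => ((bathRate T Ω t i).re ^ 4)⁻¹ := by
  have hT' : T ≠ 0 := hT.ne'
  refine Summable.sum _ ?_ ?_
  · refine ((summable_inv_nat_add_pow (by positivity : 0 < 1 + T / Ω)
      (by norm_num : 1 < 4)).mul_left (T ^ 4)).congr fun k => ?_
    rw [Function.comp_apply, bathRate_inl_re]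
    field_simp
  · refine ((summable_inv_nat_add_pow (by positivity : 0 < T / Ω)
      (by norm_num : 1 < 4)).mul_left (T ^ 4)).congr fun k => ?_
    rw [Function.comp_apply, bathRate_inr_re]
    field_simp

lemma hasSum_bathIntegrand {T Ω t ω : ℝ} (hT : 0 < T) (hΩ : Ω ≠ 0) (hω : 0 < ω) :
    HasSum (fun i => (ω : ℂ) ^ 3 * exp (-(bathRate T Ω t i * ω)))
      (Ω ^ 2 * bathIntegrand T Ω t ω) := by
  have hΩ' : (Ω : ℂ) ≠ 0 := by exact_mod_cast hΩ
  have hT' : (T : ℂ) ≠ 0 := by exact_mod_cast hT.ne'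
  have hw : 0 < ((ω : ℂ) / T).re := by simpa [div_ofReal_re] using div_pos hω hT
  have hcutoff : (Ω : ℂ) ^ 2 * Jspec Ω ω = (ω : ℂ) ^ 3 * exp (-ω / Ω) := by
    simp only [Jspec]
    push_cast
    field_simp
  have hthermal := (hasSum_exp_neg_succ_mul hw).mul_left (Ω ^ 2 * Jspec Ω ω * exp (I * ω * t))
  have hemission := (hasSum_exp_neg_nat_mul hw).mul_left (Ω ^ 2 * Jspec Ω ω * exp (-(I * ω * t)))
  have hval : (Ω : ℂ) ^ 2 * bathIntegrand T Ω t ω =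
      Ω ^ 2 * Jspec Ω ω * exp (I * ω * t) * (1 / (exp (ω / T) - 1)) +
        Ω ^ 2 * Jspec Ω ω * exp (-(I * ω * t)) * (1 / (exp (ω / T) - 1) + 1) := by
    simp only [bathIntegrand]
    ring
  rw [hval]
  refine HasSum.sum (hthermal.congr_fun fun k => ?_) (hemission.congr_fun fun k => ?_) <;>
  · simp only [Function.comp_apply, Sum.elim_inl, Sum.elim_inr, bathRate]
    rw [hcutoff]
    simp only [mul_assoc, ← exp_add]
    congr 2
    field_simp
    ring

lemma hasSum_factorial_div_bathRate_pow {T Ω t : ℝ} (hT : 0 < T) (hΩ : 0 < Ω) :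
    HasSum (fun i => (3 ! : ℂ) / bathRate T Ω t i ^ 4) ((6 * T ^ 4 : ℂ) *
      (genZeta 4 (1 + (T : ℂ) / Ω - I * T * t) + genZeta 4 ((T : ℂ) / Ω + I * T * t))) := by
  have hT' : (T : ℂ) ≠ 0 := by exact_mod_cast hT.ne'
  have hc : 0 < T / Ω := by positivity
  rw [show (3 ! : ℂ) = 6 by norm_num [Nat.factorial], mul_add]
  refine HasSum.sum ?_ ?_
  · refine ((hasSum_genZeta (p := 4) (by simpa [div_ofReal_re] using add_pos one_pos hc)
      (by norm_num)).mul_left (6 * T ^ 4 : ℂ)).congr_fun fun k => ?_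
    simp only [Function.comp_apply, bathRate, Sum.elim_inl]
    field_simp
  · refine ((hasSum_genZeta (p := 4) (by simpa [div_ofReal_re] using hc)
      (by norm_num)).mul_left (6 * T ^ 4 : ℂ)).congr_fun fun k => ?_
    simp only [Function.comp_apply, bathRate, Sum.elim_inr]
    field_simp

/-- Closed form of the bath correlation function for the `s = 3`
super-Ohmic spectral density:
`C(T,𝔍;t) = (6T⁴/Ω²)[b(4, 1 + T/Ω − iTt) + b(4, T/Ω + iTt)]`. -/
theorem bathCorr_eq_genZeta (T Ω t : ℝ) (hT : 0 < T) (hΩ : 0 < Ω) :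
    bathCorr T Ω t = ((6 * T ^ 4 / Ω ^ 2 : ℝ) : ℂ) *
      (genZeta 4 (1 + (T : ℂ) / (Ω : ℂ) - Complex.I * (T : ℂ) * (t : ℂ)) +
        genZeta 4 ((T : ℂ) / (Ω : ℂ) + Complex.I * (T : ℂ) * (t : ℂ))) := by
  have hΩ' : (Ω : ℂ) ≠ 0 := by exact_mod_cast hΩ.ne'
  have hexpand := hasSum_integral_of_hasSum_pow_mul_exp_neg_mul (bathRate_re_pos (t := t) hT hΩ)
    (summable_inv_bathRate_re_pow hT hΩ) fun ω hω => hasSum_bathIntegrand hT hΩ.ne' hω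
  have hmoments := hexpand.unique (hasSum_factorial_div_bathRate_pow hT hΩ)
  rw [integral_const_mul] at hmoments
  calc bathCorr T Ω t = ((Ω : ℂ) ^ 2)⁻¹ * (Ω ^ 2 * ∫ ω in Ioi 0, bathIntegrand T Ω t ω) := by
        rw [inv_mul_cancel_left₀ (pow_ne_zero 2 hΩ')]
        rfl
    _ = _ := by
        rw [hmoments]
        push_cast
        ring
end
end

section
/- Let T, Ω > 0, let 𝔍(ω) = (ω³/Ω²) e^{−ω/Ω}, and let C(T, 𝔍; t) = ∫_0^∞ 𝔍(ω) [ e^{iωt}/(e^{ω/T} − 1) + e^{−iωt} (1/(e^{ω/T} − 1) + 1) ] dω. Then for every t ∈ ℝ, |C(T, 𝔍; t)| ≤ (6 T⁴/Ω²) ( 1/(T²/Ω² + t²T²)² + Σ_{n=1}^∞ 2/(n² + t²T²)² ). -/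
/-!
Expanding the Bose factor `1 / (e^{ω/T} - 1) = ∑_{n ≥ 1} e^{-nω/T}` turns `C(T, 𝔍; t)` into
`Ω⁻²` times a series of Laplace transforms `∫₀^∞ ω³ e^{-zω} dω = 6 / z⁴`, taken at
`z = 1/Ω ∓ it + n/T` (`n ≥ 1`) for the two thermal terms and at `z = 1/Ω + it` for the vacuum term.
Since `|z|² ≥ (n/T)² + t²`, each term is bounded by `6 T⁴ / (n² + t²T²)²`.
-/

open MeasureTheory

noncomputable section

open Set Filter Topology Complex
open scoped Real Nat

theorem integral_pow_mul_exp_neg_mul_Ioi (n : ℕ) {a : ℝ} (ha : 0 < a) :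
    ∫ x in Ioi (0 : ℝ), x ^ n * rexp (-(a * x)) = n ! / a ^ (n + 1) := by
  have key := Real.integral_rpow_mul_exp_neg_mul_Ioi (a := n + 1) (by positivity) ha
  simp only [add_sub_cancel_right, Real.rpow_natCast] at key
  rw [key, Real.Gamma_nat_eq_factorial, ← Nat.cast_add_one, Real.rpow_natCast, one_div, inv_pow,
    div_eq_inv_mul]

theorem integrableOn_pow_mul_exp_neg_mul_Ioi (n : ℕ) {a : ℝ} (ha : 0 < a) :
    IntegrableOn (fun x : ℝ ↦ x ^ n * rexp (-(a * x))) (Ioi 0) :=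
  .of_integral_ne_zero (by rw [integral_pow_mul_exp_neg_mul_Ioi n ha]; positivity)

theorem norm_ofReal_pow_mul_cexp_neg_mul (n : ℕ) (z : ℂ) {x : ℝ} (hx : 0 ≤ x) :
    ‖(x : ℂ) ^ n * cexp (-(z * x))‖ = x ^ n * rexp (-(z.re * x)) := by
  simp [norm_exp, abs_of_nonneg hx]

theorem integrableOn_ofReal_pow_mul_cexp_neg_mul_Ioi (n : ℕ) {z : ℂ} (hz : 0 < z.re) :
    IntegrableOn (fun x : ℝ ↦ (x : ℂ) ^ n * cexp (-(z * x))) (Ioi 0) := by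
  refine (integrableOn_pow_mul_exp_neg_mul_Ioi n hz).mono'
    (Continuous.aestronglyMeasurable (by fun_prop)) ?_
  filter_upwards [ae_restrict_mem measurableSet_Ioi] with x hx
  exact (norm_ofReal_pow_mul_cexp_neg_mul n z hx.le).le

theorem tendsto_ofReal_pow_mul_cexp_neg_mul_atTop (n : ℕ) {z : ℂ} (hz : 0 < z.re) :
    Tendsto (fun x : ℝ ↦ (x : ℂ) ^ n * cexp (-(z * x))) atTop (𝓝 0) := by
  rw [tendsto_zero_iff_norm_tendsto_zero]
  refine (tendsto_rpow_mul_exp_neg_mul_atTop_nhds_zero n z.re hz).congr' ?_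
  filter_upwards [eventually_ge_atTop 0] with x hx
  rw [norm_ofReal_pow_mul_cexp_neg_mul n z hx, Real.rpow_natCast, neg_mul]

theorem integral_ofReal_pow_succ_mul_cexp_neg_mul_Ioi (n : ℕ) {z : ℂ} (hz : 0 < z.re) :
    ∫ x in Ioi (0 : ℝ), (x : ℂ) ^ (n + 1) * cexp (-(z * x))
      = (n + 1) / z * ∫ x in Ioi (0 : ℝ), (x : ℂ) ^ n * cexp (-(z * x)) := by
  have hz0 : z ≠ 0 := by rintro rfl; simp at hz
  have hu : ∀ x ∈ Ioi (0 : ℝ), HasDerivAt (fun x : ℝ ↦ (x : ℂ) ^ (n + 1))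
      ((n + 1 : ℂ) * (x : ℂ) ^ n) x := fun x _ ↦ by
    simpa using ((hasDerivAt_id (x : ℂ)).pow (n + 1)).comp_ofReal
  have hv : ∀ x ∈ Ioi (0 : ℝ), HasDerivAt (fun x : ℝ ↦ -cexp (-(z * x)) / z)
      (cexp (-(z * x))) x := fun x _ ↦ by
    convert (((hasDerivAt_id (x : ℂ)).const_mul z).neg.cexp.neg.div_const z).comp_ofReal using 1
    · ext y; simp [neg_div]
    · simp only [Pi.neg_apply, id_eq]; field_simp
  have hu'v (x : ℝ) : (n + 1 : ℂ) * (x : ℂ) ^ n * (-cexp (-(z * x)) / z)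
      = -((n + 1) / z) * ((x : ℂ) ^ n * cexp (-(z * x))) := by ring
  have huv_atTop : Tendsto (fun x : ℝ ↦ (x : ℂ) ^ (n + 1) * (-cexp (-(z * x)) / z)) atTop
      (𝓝 0) := by
    simpa [mul_div_assoc', neg_div, mul_neg] using
      ((tendsto_ofReal_pow_mul_cexp_neg_mul_atTop (n + 1) hz).div_const z).neg
  have huv_zero : Tendsto (fun x : ℝ ↦ (x : ℂ) ^ (n + 1) * (-cexp (-(z * x)) / z)) (𝓝[>] 0)
      (𝓝 0) := by
    refine tendsto_nhdsWithin_of_tendsto_nhds ?_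
    simpa using (by fun_prop : Continuous fun x : ℝ ↦
      (x : ℂ) ^ (n + 1) * (-cexp (-(z * x)) / z)).tendsto 0
  rw [integral_Ioi_mul_deriv_eq_deriv_mul hu hv
    (integrableOn_ofReal_pow_mul_cexp_neg_mul_Ioi (n + 1) hz) ?_ huv_zero huv_atTop]
  · simp only [hu'v, integral_const_mul]
    ring
  · exact IntegrableOn.congr_fun ((integrableOn_ofReal_pow_mul_cexp_neg_mul_Ioi n hz).const_mul _)
      (fun x _ ↦ (hu'v x).symm) measurableSet_Ioi

theorem integral_ofReal_pow_mul_cexp_neg_mul_Ioi (n : ℕ) {z : ℂ} (hz : 0 < z.re) :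
    ∫ x in Ioi (0 : ℝ), (x : ℂ) ^ n * cexp (-(z * x)) = n ! / z ^ (n + 1) := by
  have hz0 : z ≠ 0 := by rintro rfl; simp at hz
  induction n with
  | zero => simpa [neg_mul] using integral_exp_mul_complex_Ioi (a := -z) (by simpa using hz) 0
  | succ n ih =>
    rw [integral_ofReal_pow_succ_mul_cexp_neg_mul_Ioi n hz, ih, Nat.factorial_succ]
    push_cast
    field_simp
    ring

theorem summable_one_div_nat_succ_pow {p : ℕ} (hp : 1 < p) :
    Summable fun n : ℕ ↦ 1 / ((n : ℝ) + 1) ^ p := by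
  simpa using (summable_nat_add_iff 1).mpr (Real.summable_one_div_nat_pow.mpr hp)

theorem hasSum_cexp_neg_nat_succ_mul {y : ℂ} (hy : 0 < y.re) :
    HasSum (fun n : ℕ ↦ cexp (-((n + 1) * y))) (cexp y - 1)⁻¹ := by
  have hw : ‖cexp (-y)‖ < 1 := by simpa [norm_exp] using hy
  have hy1 : cexp y - 1 ≠ 0 := by
    rw [sub_ne_zero]
    intro h
    simp [exp_neg, h] at hw
  have hsum : cexp (-y) * (1 - cexp (-y))⁻¹ = (cexp y - 1)⁻¹ := by
    rw [exp_neg]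
    field_simp
  have hterm (n : ℕ) : cexp (-y) * cexp (-y) ^ n = cexp (-((n + 1) * y)) := by
    rw [← pow_succ', ← exp_nat_mul]
    push_cast
    ring_nf
  simpa only [hsum, hterm] using (hasSum_geometric_of_norm_lt_one hw).mul_left (cexp (-y))

theorem hasSum_ofReal_pow_mul_cexp_neg_mul_div_cexp_sub_one (k : ℕ) (z : ℂ) {T x : ℝ}
    (hT : 0 < T) (hx : 0 < x) :
    HasSum (fun n : ℕ ↦ (x : ℂ) ^ k * cexp (-((z + (n + 1) / T) * x)))
      ((x : ℂ) ^ k * cexp (-(z * x)) / (cexp (x / T) - 1)) := by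
  have hxT : 0 < ((x : ℂ) / T).re := by
    rw [← ofReal_div, ofReal_re]; positivity
  have hterm (n : ℕ) : (x : ℂ) ^ k * cexp (-(z * x)) * cexp (-((n + 1) * (x / T)))
      = (x : ℂ) ^ k * cexp (-((z + (n + 1) / T) * x)) := by
    rw [mul_assoc, ← exp_add]
    ring_nf
  have h := (hasSum_cexp_neg_nat_succ_mul hxT).mul_left ((x : ℂ) ^ k * cexp (-(z * x)))
  simp only [hterm] at h
  rwa [div_eq_mul_inv]

theorem hasSum_integral_ofReal_pow_mul_cexp_neg_mul_div_cexp_sub_one {k : ℕ} (hk : 1 ≤ k)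
    {z : ℂ} (hz : 0 ≤ z.re) {T : ℝ} (hT : 0 < T) :
    HasSum (fun n : ℕ ↦ (k ! : ℂ) / (z + (n + 1) / T) ^ (k + 1))
      (∫ x in Ioi (0 : ℝ), (x : ℂ) ^ k * cexp (-(z * x)) / (cexp (x / T) - 1)) := by
  have hre (n : ℕ) : (n + 1) / T ≤ (z + (n + 1) / T).re := by
    rw [add_re, ← ofReal_natCast, ← ofReal_one, ← ofReal_add, ← ofReal_div, ofReal_re]
    linarith
  have hre_pos (n : ℕ) : 0 < (z + (n + 1) / T).re :=
    (by positivity : (0 : ℝ) < (n + 1) / T).trans_le (hre n)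
  have hnorm (n : ℕ) : ∫ x in Ioi (0 : ℝ), ‖(x : ℂ) ^ k * cexp (-((z + (n + 1) / T) * x))‖
      = k ! / (z + (n + 1) / T).re ^ (k + 1) := by
    rw [← integral_pow_mul_exp_neg_mul_Ioi k (hre_pos n)]
    exact setIntegral_congr_fun measurableSet_Ioi
      fun x hx ↦ norm_ofReal_pow_mul_cexp_neg_mul k _ hx.le
  have hsummable : Summable fun n : ℕ ↦
      ∫ x in Ioi (0 : ℝ), ‖(x : ℂ) ^ k * cexp (-((z + (n + 1) / T) * x))‖ := by
    refine .of_nonneg_of_le (fun n ↦ integral_nonneg fun _ ↦ norm_nonneg _) (fun n ↦ ?_)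
      ((summable_one_div_nat_succ_pow (by omega : 1 < k + 1)).mul_left (k ! * T ^ (k + 1)))
    rw [hnorm]
    calc (k ! : ℝ) / (z + (n + 1) / T).re ^ (k + 1) ≤ k ! / ((n + 1) / T) ^ (k + 1) := by
          gcongr; exact hre n
      _ = k ! * T ^ (k + 1) * (1 / ((n : ℝ) + 1) ^ (k + 1)) := by
          rw [div_pow]
          field_simp
  have := hasSum_integral_of_summable_integral_norm
    (fun n ↦ integrableOn_ofReal_pow_mul_cexp_neg_mul_Ioi k (hre_pos n)) hsummable
  simp only [integral_ofReal_pow_mul_cexp_neg_mul_Ioi k (hre_pos _)] at this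
  rwa [setIntegral_congr_fun measurableSet_Ioi
    fun x hx ↦ (hasSum_ofReal_pow_mul_cexp_neg_mul_div_cexp_sub_one k z hT hx).tsum_eq] at this

theorem cexp_ofReal_div_sub_one {x : ℝ} (T : ℝ) :
    cexp ((x : ℂ) / T) - 1 = ((rexp (x / T) - 1 : ℝ) : ℂ) := by
  push_cast
  rfl

theorem integrableOn_ofReal_pow_mul_cexp_neg_mul_div_cexp_sub_one {k : ℕ} (hk : 1 ≤ k)
    {z : ℂ} (hz : 0 < z.re) {T : ℝ} (hT : 0 < T) :
    IntegrableOn (fun x : ℝ ↦ (x : ℂ) ^ k * cexp (-(z * x)) / (cexp (x / T) - 1)) (Ioi 0) := by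
  obtain ⟨m, rfl⟩ := Nat.exists_eq_add_of_le' hk
  -- `e^{x/T} - 1 ≥ x/T` trades the Bose factor for one power of `x`, which kills the pole at `0`.
  have hden {x : ℝ} (hx : 0 < x) : x / T ≤ rexp (x / T) - 1 := by
    linarith [Real.add_one_le_exp (x / T)]
  refine ((integrableOn_ofReal_pow_mul_cexp_neg_mul_Ioi m hz).norm.const_mul T).mono' ?_ ?_
  · refine ContinuousOn.aestronglyMeasurable ?_ measurableSet_Ioi
    refine ContinuousOn.div (by fun_prop) (by fun_prop) fun x (hx : 0 < x) ↦ ?_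
    rw [cexp_ofReal_div_sub_one, ofReal_ne_zero]
    exact ((by positivity : 0 < x / T).trans_le (hden hx)).ne'
  · filter_upwards [ae_restrict_mem measurableSet_Ioi] with x (hx : 0 < x)
    have hpos : 0 < rexp (x / T) - 1 := (by positivity : 0 < x / T).trans_le (hden hx)
    rw [norm_div, cexp_ofReal_div_sub_one, norm_real, Real.norm_of_nonneg hpos.le, pow_succ,
      mul_right_comm, norm_mul, norm_real, Real.norm_of_nonneg hx.le, div_le_iff₀ hpos]
    calc _ = T * ‖(x : ℂ) ^ m * cexp (-(z * x))‖ * (x / T) := by field_simp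
      _ ≤ T * ‖(x : ℂ) ^ m * cexp (-(z * x))‖ * (rexp (x / T) - 1) := by gcongr; exact hden hx

theorem sq_add_im_sq_le_norm_add_ofReal_sq {z : ℂ} (hz : 0 ≤ z.re) {s : ℝ} (hs : 0 ≤ s) :
    s ^ 2 + z.im ^ 2 ≤ ‖z + s‖ ^ 2 := by
  rw [← normSq_eq_norm_sq, normSq_apply]
  simp only [add_re, ofReal_re, add_im, ofReal_im, add_zero]
  nlinarith

theorem summable_one_div_nat_succ_sq_add_sq {c : ℝ} (hc : 0 ≤ c) :
    Summable fun n : ℕ ↦ 1 / (((n : ℝ) + 1) ^ 2 + c) ^ 2 := by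
  refine (summable_one_div_nat_succ_pow (by norm_num : 1 < 4)).of_nonneg_of_le
    (fun n ↦ by positivity) fun n ↦ ?_
  gcongr
  nlinarith

theorem norm_integral_ofReal_pow_three_mul_cexp_neg_mul_div_cexp_sub_one_le {z : ℂ}
    (hz : 0 ≤ z.re) {T : ℝ} (hT : 0 < T) :
    ‖∫ x in Ioi (0 : ℝ), (x : ℂ) ^ 3 * cexp (-(z * x)) / (cexp (x / T) - 1)‖
      ≤ 6 * T ^ 4 * ∑' n : ℕ, 1 / (((n : ℝ) + 1) ^ 2 + z.im ^ 2 * T ^ 2) ^ 2 := by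
  refine (hasSum_integral_ofReal_pow_mul_cexp_neg_mul_div_cexp_sub_one (by norm_num) hz hT)
    |>.norm_le_of_bounded ((summable_one_div_nat_succ_sq_add_sq (by positivity)).hasSum.mul_left _)
      fun n ↦ ?_
  have hs : z + ((n : ℂ) + 1) / T = z + (((n + 1) / T : ℝ) : ℂ) := by push_cast; rfl
  have hlow := sq_add_im_sq_le_norm_add_ofReal_sq hz (by positivity : 0 ≤ ((n : ℝ) + 1) / T)
  have hD : (((n : ℝ) + 1) ^ 2 + z.im ^ 2 * T ^ 2) / T ^ 2 = ((n + 1) / T) ^ 2 + z.im ^ 2 := by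
    field_simp
  rw [norm_div, norm_pow, hs, show (3 + 1 : ℕ) = 2 * 2 from rfl, pow_mul]
  rw [← hD] at hlow
  calc ‖((3 ! : ℕ) : ℂ)‖ / (‖z + (((n + 1) / T : ℝ) : ℂ)‖ ^ 2) ^ 2
      ≤ 6 / ((((n : ℝ) + 1) ^ 2 + z.im ^ 2 * T ^ 2) / T ^ 2) ^ 2 := by
        gcongr
        · simp [Nat.factorial]
    _ = 6 * T ^ 4 * (1 / (((n : ℝ) + 1) ^ 2 + z.im ^ 2 * T ^ 2) ^ 2) := by
        field_simp

theorem bathCorr_eq {T Ω : ℝ} (hT : 0 < T) (hΩ : 0 < Ω) (t : ℝ) :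
    bathCorr T Ω t = ((Ω : ℂ) ^ 2)⁻¹ *
      ((∫ x in Ioi (0 : ℝ), (x : ℂ) ^ 3 * cexp (-((1 / Ω - t * I) * x)) / (cexp (x / T) - 1)) +
        (∫ x in Ioi (0 : ℝ), (x : ℂ) ^ 3 * cexp (-((1 / Ω + t * I) * x)) / (cexp (x / T) - 1)) +
        ∫ x in Ioi (0 : ℝ), (x : ℂ) ^ 3 * cexp (-((1 / Ω + t * I) * x))) := by
  have hpt (ω : ℝ) : (Jspec Ω ω : ℂ) *
      (cexp (I * ω * t) / (cexp (ω / T) - 1) + cexp (-(I * ω * t)) * (1 / (cexp (ω / T) - 1) + 1))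
      = ((Ω : ℂ) ^ 2)⁻¹ * ((ω : ℂ) ^ 3 * cexp (-((1 / Ω - t * I) * ω)) / (cexp (ω / T) - 1) +
        (ω : ℂ) ^ 3 * cexp (-((1 / Ω + t * I) * ω)) / (cexp (ω / T) - 1) +
        (ω : ℂ) ^ 3 * cexp (-((1 / Ω + t * I) * ω))) := by
    have h₁ : cexp (-((1 / Ω - t * I) * ω)) = cexp (-ω / Ω) * cexp (I * ω * t) := by
      rw [← exp_add]; ring_nf
    have h₂ : cexp (-((1 / Ω + t * I) * ω)) = cexp (-ω / Ω) * cexp (-(I * ω * t)) := by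
      rw [← exp_add]; ring_nf
    rw [h₁, h₂, Jspec]
    push_cast
    ring_nf
  have hre₁ : 0 < (1 / Ω - t * I).re := by simpa using hΩ
  have hre₂ : 0 < (1 / Ω + t * I).re := by simpa using hΩ
  have hB₁ :=
    integrableOn_ofReal_pow_mul_cexp_neg_mul_div_cexp_sub_one (k := 3) le_add_self hre₁ hT
  have hB₂ :=
    integrableOn_ofReal_pow_mul_cexp_neg_mul_div_cexp_sub_one (k := 3) le_add_self hre₂ hT
  rw [bathCorr, setIntegral_congr_fun measurableSet_Ioi fun ω _ ↦ hpt ω, integral_const_mul,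
    integral_add, integral_add]
  exacts [hB₁, hB₂, hB₁.add hB₂, integrableOn_ofReal_pow_mul_cexp_neg_mul_Ioi 3 hre₂]

/-- Pointwise bound on the bath correlation function:
`|C(T,𝔍;t)| ≤ (6T⁴/Ω²)(1/(T²/Ω² + t²T²)² + Σ_{n=1}^∞ 2/(n² + t²T²)²)`. -/
theorem abs_bathCorr_le (T Ω t : ℝ) (hT : 0 < T) (hΩ : 0 < Ω) :
    ‖bathCorr T Ω t‖ ≤ 6 * T ^ 4 / Ω ^ 2 *
      (1 / (T ^ 2 / Ω ^ 2 + t ^ 2 * T ^ 2) ^ 2 +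
        ∑' k : ℕ, 2 / (((k : ℝ) + 1) ^ 2 + t ^ 2 * T ^ 2) ^ 2) := by
  have hre (s : ℝ) : (1 / Ω + s * I).re = 1 / Ω := by simp
  have him (s : ℝ) : (1 / Ω + s * I).im = s := by simp
  have hthermal₁ := norm_integral_ofReal_pow_three_mul_cexp_neg_mul_div_cexp_sub_one_le
    (z := 1 / Ω + t * I) (by rw [hre]; positivity) hT
  have hthermal₂ := norm_integral_ofReal_pow_three_mul_cexp_neg_mul_div_cexp_sub_one_le
    (z := 1 / Ω + (-t : ℝ) * I) (by rw [hre]; positivity) hT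
  rw [him] at hthermal₁
  rw [him, neg_sq, ofReal_neg, neg_mul, ← sub_eq_add_neg] at hthermal₂
  have hvacuum : ‖∫ x in Ioi (0 : ℝ), (x : ℂ) ^ 3 * cexp (-((1 / Ω + t * I) * x))‖
      = 6 / (1 / Ω ^ 2 + t ^ 2) ^ 2 := by
    rw [integral_ofReal_pow_mul_cexp_neg_mul_Ioi 3 (by rw [hre]; positivity), norm_div,
      norm_pow, show (3 + 1 : ℕ) = 2 * 2 from rfl, pow_mul, ← normSq_eq_norm_sq, normSq_apply,
      hre, him]
    simp [Nat.factorial]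
    ring
  have hsum : ∑' k : ℕ, 2 / (((k : ℝ) + 1) ^ 2 + t ^ 2 * T ^ 2) ^ 2
      = 2 * ∑' k : ℕ, 1 / (((k : ℝ) + 1) ^ 2 + t ^ 2 * T ^ 2) ^ 2 := by
    rw [← tsum_mul_left]; simp only [mul_one_div]
  rw [bathCorr_eq hT hΩ, norm_mul, hsum]
  calc _ ≤ ‖((Ω : ℂ) ^ 2)⁻¹‖ * (6 * T ^ 4 * ∑' n : ℕ, 1 / (((n : ℝ) + 1) ^ 2 + t ^ 2 * T ^ 2) ^ 2
          + 6 * T ^ 4 * ∑' n : ℕ, 1 / (((n : ℝ) + 1) ^ 2 + t ^ 2 * T ^ 2) ^ 2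
          + 6 / (1 / Ω ^ 2 + t ^ 2) ^ 2) := by
        gcongr
        exact (norm_add₃_le).trans (by rw [hvacuum]; gcongr)
    _ = _ := by
        simp only [norm_inv, norm_pow, norm_real, Real.norm_of_nonneg hΩ.le]
        field_simp
        ring
end
end
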